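/- arXiv:1706.09312 — 4 statements merged into one kernel-verified Lean document; each statement's English description precedes it below -/
import Mathlib

section
/- Let θ ∈ (−1, 1) with θ ≠ 0, and let q₀, q₁ ∈ L^∞(ℝ) with ‖q₀q₁‖_∞ < max(‖q₀‖_∞, ‖q₁‖_∞)². On L²(ℝ) ⊕ L²(ℝ) with norm ‖(h₀,h₁)‖_θ² = ‖h₀‖₂² + ‖h₁‖₂² + 2θ·Re⟨h₀,h₁⟩, the operator T(h₀,h₁) = (q₀h₀, q₁h₁) satisfies ‖T‖_op > max(‖q₀‖_∞, ‖q₁‖_∞). -/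
/-!
Let `M = ‖q₀‖_∞` be the larger of the two norms and test `T` on `(F, t F)`, where `F ∈ L²` lives
where `|q₀|` is close to `M` and `t` has the sign opposite to `θ`. Then `‖(F, tF)‖_θ² =
(1 + t² + 2θt) ‖F‖²`, whereas in `‖T(F, tF)‖_θ²` the cross term `⟨q₀F, q₁ tF⟩` is controlled by
`‖q₀q₁‖_∞ |t| ‖F‖²` instead of `M² |t| ‖F‖²`. To first order in `t` this gains
`2|θt| (M² - ‖q₀q₁‖_∞) ‖F‖²` over `M² ‖(F, tF)‖_θ²`, which beats the second-order loss `M² t² ‖F‖²`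
for small `t`.
-/

open MeasureTheory
open scoped ENNReal

namespace MeasureTheory

variable {α 𝕜 : Type*} [MeasurableSpace α] {μ : Measure α} [RCLike 𝕜]

theorem MemLp.toLp_smul_eq_smul_toLp {q : α → 𝕜} (hq : MemLp q ∞ μ) {p : ℝ≥0∞}
    (F : Lp 𝕜 p μ) :
    (hq.smul (r := p) (Lp.memLp F)).toLp (⇑F • q) = (F • hq.toLp q : Lp 𝕜 p μ) := by
  rw [Lp.smul_def]
  refine MemLp.toLp_congr _ _ ?_
  filter_upwards [hq.coeFn_toLp] with x hx
  rw [Pi.smul_apply', Pi.smul_apply', hx]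

namespace Lp

theorem exists_mul_norm_lt_norm_smul [SigmaFinite μ] {p : ℝ≥0∞} [Fact (1 ≤ p)] (hp : p ≠ ∞)
    (Q : Lp 𝕜 ∞ μ) {c : ℝ} (hc0 : 0 ≤ c) (hc : c < ‖Q‖) :
    ∃ F : Lp 𝕜 p μ, c * ‖F‖ < ‖(F • Q : Lp 𝕜 p μ)‖ := by
  obtain ⟨c', hcc', hc'Q⟩ := exists_between hc
  have hc' : 0 ≤ c' := hc0.trans hcc'.le
  set s := {x | c' < ‖Q x‖}
  have hs : MeasurableSet s :=
    measurableSet_lt measurable_const (Lp.stronglyMeasurable Q).measurable.norm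
  have hμs : 0 < μ s := by
    refine pos_iff_ne_zero.2 fun hs0 => hc'Q.not_ge ?_
    have hbound : ∀ᵐ x ∂μ, ‖Q x‖ ≤ c' := by
      filter_upwards [measure_eq_zero_iff_ae_notMem.1 hs0] with x hx
      exact not_lt.1 hx
    rw [Lp.norm_def, eLpNorm_exponent_top]
    exact ENNReal.toReal_le_of_le_ofReal hc' (eLpNormEssSup_le_of_ae_bound hbound)
  obtain ⟨S, hS, hSs, hSpos, hSfin⟩ := Measure.exists_subset_measure_lt_top hs hμs
  set F := indicatorConstLp p hS hSfin.ne (1 : 𝕜)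
  have hF : 0 < ‖F‖ := by
    rw [norm_indicatorConstLp (zero_lt_one.trans_le Fact.out).ne' hp, norm_one, one_mul]
    exact Real.rpow_pos_of_pos (ENNReal.toReal_pos hSpos.ne' hSfin.ne) _
  refine ⟨F, (mul_lt_mul_of_pos_right hcc' hF).trans_le ?_⟩
  have hle : ‖c' • F‖ ≤ ‖(F • Q : Lp 𝕜 p μ)‖ := by
    refine Lp.norm_le_norm_of_ae_le ?_
    filter_upwards [Lp.coeFn_smul c' F, Lp.coeFn_lpSMul (r := p) F Q,
      indicatorConstLp_coeFn_notMem (p := p) (hs := hS) (hμs := hSfin.ne) (c := (1 : 𝕜))]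
      with x hcF hFQ hF0
    rw [hcF, hFQ, Pi.smul_apply, Pi.smul_apply', norm_smul, norm_smul, Real.norm_of_nonneg hc',
      mul_comm]
    by_cases hxS : x ∈ S
    · exact mul_le_mul_of_nonneg_left (hSs hxS).le (norm_nonneg _)
    · rw [show (F : α → 𝕜) x = 0 from hF0 hxS]; simp
  rwa [norm_smul, Real.norm_of_nonneg hc'] at hle

theorem norm_inner_smul_smul_le (Q₀ Q₁ : Lp 𝕜 ∞ μ) (F G : Lp 𝕜 2 μ) :
    ‖inner 𝕜 (F • Q₀ : Lp 𝕜 2 μ) (G • Q₁ : Lp 𝕜 2 μ)‖ ≤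
      (eLpNorm (⇑Q₀ * ⇑Q₁) ∞ μ).toReal * ‖F‖ * ‖G‖ := by
  have hR : MemLp (star ⇑Q₀ * ⇑Q₁) ∞ μ := (Lp.memLp Q₁).mul (Lp.memLp Q₀).star
  have hinner : inner 𝕜 (F • Q₀ : Lp 𝕜 2 μ) (G • Q₁ : Lp 𝕜 2 μ) =
      inner 𝕜 F (G • hR.toLp _ : Lp 𝕜 2 μ) := by
    simp only [L2.inner_def]
    refine integral_congr_ae ?_
    filter_upwards [Lp.coeFn_lpSMul (r := 2) F Q₀, Lp.coeFn_lpSMul (r := 2) G Q₁,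
      Lp.coeFn_lpSMul (r := 2) G (hR.toLp _), hR.coeFn_toLp] with x h₀ h₁ h₂ hRx
    simp only [h₀, h₁, h₂, hRx, Pi.smul_apply', Pi.mul_apply, Pi.star_apply, smul_eq_mul,
      RCLike.inner_apply, map_mul, RCLike.star_def]
    ring
  have hRnorm : ‖hR.toLp _‖ = (eLpNorm (⇑Q₀ * ⇑Q₁) ∞ μ).toReal := by
    rw [Lp.norm_toLp]
    congr 1
    refine eLpNorm_congr_norm_ae (.of_forall fun x => ?_)
    simp only [Pi.mul_apply, Pi.star_apply, norm_mul, norm_star]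
  calc ‖inner 𝕜 (F • Q₀ : Lp 𝕜 2 μ) (G • Q₁ : Lp 𝕜 2 μ)‖
      ≤ ‖F‖ * ‖(G • hR.toLp _ : Lp 𝕜 2 μ)‖ := hinner ▸ norm_inner_le_norm _ _
    _ ≤ ‖F‖ * (‖G‖ * ‖hR.toLp _‖) := by gcongr; exact Lp.norm_smul_le (r := 2) _ _
    _ = (eLpNorm (⇑Q₀ * ⇑Q₁) ∞ μ).toReal * ‖F‖ * ‖G‖ := by rw [hRnorm]; ring

end Lp

end MeasureTheory

section ThetaNorm

variable {E : Type*} [NormedAddCommGroup E] [InnerProductSpace ℂ E]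

noncomputable def thetaNormSq (θ : ℝ) (h : E × E) : ℝ :=
  ‖h.1‖ ^ 2 + ‖h.2‖ ^ 2 + 2 * θ * (inner ℂ h.1 h.2).re

theorem thetaNormSq_swap (θ : ℝ) (h : E × E) : thetaNormSq θ h.swap = thetaNormSq θ h := by
  simp only [thetaNormSq, Prod.fst_swap, Prod.snd_swap]
  rw [← inner_conj_symm, Complex.conj_re]
  ring

theorem sub_le_thetaNormSq (θ : ℝ) (h : E × E) :
    ‖h.1‖ ^ 2 + ‖h.2‖ ^ 2 - 2 * |θ| * ‖inner ℂ h.1 h.2‖ ≤ thetaNormSq θ h := by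
  have hre : |θ * (inner ℂ h.1 h.2).re| ≤ |θ| * ‖inner ℂ h.1 h.2‖ := by
    rw [abs_mul]
    exact mul_le_mul_of_nonneg_left (Complex.abs_re_le_norm _) (abs_nonneg θ)
  have := neg_abs_le (θ * (inner ℂ h.1 h.2).re)
  rw [thetaNormSq]
  linarith

theorem thetaNormSq_nonneg {θ : ℝ} (hθ : |θ| ≤ 1) (h : E × E) : 0 ≤ thetaNormSq θ h := by
  have hinner : |θ| * ‖inner ℂ h.1 h.2‖ ≤ ‖h.1‖ * ‖h.2‖ :=
    (mul_le_of_le_one_left (norm_nonneg _) hθ).trans (norm_inner_le_norm _ _)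
  nlinarith [sub_le_thetaNormSq θ h, sq_nonneg (‖h.1‖ - ‖h.2‖)]

theorem thetaNormSq_self_smul (θ t : ℝ) (x : E) :
    thetaNormSq θ (x, (t : ℂ) • x) = (1 + t ^ 2 + 2 * θ * t) * ‖x‖ ^ 2 := by
  have hxx : (inner ℂ x x).re = ‖x‖ ^ 2 := inner_self_eq_norm_sq (𝕜 := ℂ) x
  dsimp only [thetaNormSq]
  rw [norm_smul, inner_smul_right, Complex.re_ofReal_mul, hxx, Complex.norm_real,
    Real.norm_eq_abs, mul_pow, sq_abs]
  ring

theorem exists_mul_sqrt_thetaNormSq_lt {θ M P : ℝ} (S₀ S₁ : E → E) (hθ : |θ| ≤ 1) (hθ0 : θ ≠ 0)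
    (hM : 0 < M) (hPM : P < M ^ 2)
    (happrox : ∀ c, 0 ≤ c → c < M → ∃ x, c * ‖x‖ < ‖S₀ x‖)
    (hcross : ∀ x y, ‖inner ℂ (S₀ x) (S₁ y)‖ ≤ P * ‖x‖ * ‖y‖) :
    ∃ h : E × E, M * √(thetaNormSq θ h) < √(thetaNormSq θ (S₀ h.1, S₁ h.2)) := by
  -- With `t = -θκ` the first-order gain `2θ²κ(M² - P)` is twice the second-order loss `M²t²`.
  set κ := (M ^ 2 - P) / M ^ 2
  set t := -θ * κ
  have hκ : 0 < κ := div_pos (sub_pos.2 hPM) (by positivity)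
  have hθt : |θ| * |t| = θ ^ 2 * κ := by
    rw [abs_mul, abs_neg, abs_of_pos hκ, ← mul_assoc, ← sq, sq_abs]
  set X := M ^ 2 * (1 + t ^ 2 + 2 * θ * t) + 2 * (|θ| * |t|) * P
  have hX : X < M ^ 2 := by
    have hMκ : M ^ 2 * κ = M ^ 2 - P := mul_div_cancel₀ _ (by positivity)
    have : X - M ^ 2 = -(θ ^ 2 * κ * (M ^ 2 - P)) := by
      simp only [X, hθt, t]
      linear_combination θ ^ 2 * κ * hMκ
    have : 0 < θ ^ 2 * κ * (M ^ 2 - P) := by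
      have := sub_pos.2 hPM
      positivity
    linarith
  obtain ⟨x, hx⟩ := happrox √X (Real.sqrt_nonneg X) ((Real.sqrt_lt' hM).2 hX)
  have hA : X * ‖x‖ ^ 2 < ‖S₀ x‖ ^ 2 := calc
    X * ‖x‖ ^ 2 ≤ (√X * ‖x‖) ^ 2 := by
      rw [mul_pow, Real.sq_sqrt']
      exact mul_le_mul_of_nonneg_right (le_max_left _ _) (sq_nonneg _)
    _ < ‖S₀ x‖ ^ 2 := pow_lt_pow_left₀ hx (by positivity) two_ne_zero
  have hB : ‖inner ℂ (S₀ x) (S₁ ((t : ℂ) • x))‖ ≤ P * |t| * ‖x‖ ^ 2 := by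
    have := hcross x ((t : ℂ) • x)
    rwa [norm_smul, Complex.norm_real, Real.norm_eq_abs, ← mul_assoc, mul_assoc P, mul_comm ‖x‖,
      ← mul_assoc, mul_assoc, ← sq] at this
  refine ⟨(x, (t : ℂ) • x), ?_⟩
  have key : M ^ 2 * thetaNormSq θ (x, (t : ℂ) • x) < thetaNormSq θ (S₀ x, S₁ ((t : ℂ) • x)) :=
    calc M ^ 2 * thetaNormSq θ (x, (t : ℂ) • x)
        = X * ‖x‖ ^ 2 - 2 * |θ| * (P * |t| * ‖x‖ ^ 2) := by
          rw [thetaNormSq_self_smul]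
          ring
      _ < ‖S₀ x‖ ^ 2 + ‖S₁ ((t : ℂ) • x)‖ ^ 2 -
            2 * |θ| * ‖inner ℂ (S₀ x) (S₁ ((t : ℂ) • x))‖ := by
          have := mul_le_mul_of_nonneg_left hB (by positivity : (0 : ℝ) ≤ 2 * |θ|)
          linarith [sq_nonneg ‖S₁ ((t : ℂ) • x)‖]
      _ ≤ thetaNormSq θ (S₀ x, S₁ ((t : ℂ) • x)) := sub_le_thetaNormSq θ (S₀ x, S₁ ((t : ℂ) • x))
  calc M * √(thetaNormSq θ (x, (t : ℂ) • x))
      = √(M ^ 2 * thetaNormSq θ (x, (t : ℂ) • x)) := by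
        rw [Real.sqrt_mul (sq_nonneg M), Real.sqrt_sq hM.le]
    _ < √(thetaNormSq θ (S₀ x, S₁ ((t : ℂ) • x))) :=
        Real.sqrt_lt_sqrt (mul_nonneg (sq_nonneg M) (thetaNormSq_nonneg hθ _)) key

end ThetaNorm

theorem exists_mul_sqrt_thetaNormSq_lt_of_memLp {α : Type*} [MeasurableSpace α] {μ : Measure α}
    [SigmaFinite μ] {θ : ℝ} (hθ : |θ| ≤ 1) (hθ0 : θ ≠ 0) {q₀ q₁ : α → ℂ} (hq₀ : MemLp q₀ ∞ μ)
    (hq₁ : MemLp q₁ ∞ μ)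
    (hprod : (eLpNorm (q₀ * q₁) ∞ μ).toReal < (eLpNorm q₀ ∞ μ).toReal ^ 2) :
    ∃ h : Lp ℂ 2 μ × Lp ℂ 2 μ, (eLpNorm q₀ ∞ μ).toReal * √(thetaNormSq θ h) <
      √(thetaNormSq θ ((hq₀.smul (r := 2) (Lp.memLp h.1)).toLp (⇑h.1 • q₀),
        (hq₁.smul (r := 2) (Lp.memLp h.2)).toLp (⇑h.2 • q₁))) := by
  have hprod' : eLpNorm (q₀ * q₁) ∞ μ = eLpNorm (⇑(hq₀.toLp q₀) * ⇑(hq₁.toLp q₁)) ∞ μ :=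
    eLpNorm_congr_ae (hq₀.coeFn_toLp.mul hq₁.coeFn_toLp).symm
  rw [hprod', ← Lp.norm_toLp q₀ hq₀] at hprod
  have hM : 0 < ‖hq₀.toLp q₀‖ :=
    lt_of_pow_lt_pow_left₀ 2 (norm_nonneg _) (by simpa using ENNReal.toReal_nonneg.trans_lt hprod)
  obtain ⟨h, hh⟩ := exists_mul_sqrt_thetaNormSq_lt
    (fun F : Lp ℂ 2 μ => (F • hq₀.toLp q₀ : Lp ℂ 2 μ))
    (fun G : Lp ℂ 2 μ => (G • hq₁.toLp q₁ : Lp ℂ 2 μ)) hθ hθ0 hM hprod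
    (fun c hc0 hc => Lp.exists_mul_norm_lt_norm_smul ENNReal.ofNat_ne_top _ hc0 hc)
    (fun F G => Lp.norm_inner_smul_smul_le _ _ F G)
  refine ⟨h, ?_⟩
  rwa [MemLp.toLp_smul_eq_smul_toLp, MemLp.toLp_smul_eq_smul_toLp, ← Lp.norm_toLp q₀ hq₀]

/-- If θ ≠ 0 and ‖q₀q₁‖_∞ < max(‖q₀‖_∞,‖q₁‖_∞)², then the operator T(h₀,h₁) = (q₀h₀, q₁h₁)
on L²(ℝ) ⊕ L²(ℝ) with norm ‖(h₀,h₁)‖_θ has operator norm strictly greater than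
max(‖q₀‖_∞, ‖q₁‖_∞). -/
theorem stmt_7 (θ : ℝ) (hθ₁ : -1 < θ) (hθ₂ : θ < 1) (hθ : θ ≠ 0)
    (q₀ q₁ : ℝ → ℂ) (hq₀ : MemLp q₀ ⊤ (volume : Measure ℝ))
    (hq₁ : MemLp q₁ ⊤ (volume : Measure ℝ))
    (hprod : (eLpNorm (q₀ * q₁) ⊤ volume).toReal <
      (max (eLpNorm q₀ ⊤ volume).toReal (eLpNorm q₁ ⊤ volume).toReal) ^ 2) :
    let Nθ : Lp ℂ 2 (volume : Measure ℝ) × Lp ℂ 2 (volume : Measure ℝ) → ℝ := fun h =>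
      Real.sqrt (‖h.1‖ ^ 2 + ‖h.2‖ ^ 2 + 2 * θ * (inner ℂ h.1 h.2 : ℂ).re)
    let T : Lp ℂ 2 (volume : Measure ℝ) × Lp ℂ 2 (volume : Measure ℝ) →
        Lp ℂ 2 (volume : Measure ℝ) × Lp ℂ 2 (volume : Measure ℝ) := fun h =>
      ((hq₀.smul (r := 2) (Lp.memLp h.1)).toLp ((h.1 : ℝ → ℂ) • q₀),
       (hq₁.smul (r := 2) (Lp.memLp h.2)).toLp ((h.2 : ℝ → ℂ) • q₁))
    ∃ h, (max (eLpNorm q₀ ⊤ volume).toReal (eLpNorm q₁ ⊤ volume).toReal) * Nθ h < Nθ (T h) := by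
  intro Nθ T
  have hθ' : |θ| ≤ 1 := abs_le.2 ⟨hθ₁.le, hθ₂.le⟩
  rcases max_choice (eLpNorm q₀ ⊤ volume).toReal (eLpNorm q₁ ⊤ volume).toReal with hmax | hmax <;>
    rw [hmax] at hprod ⊢
  · exact exists_mul_sqrt_thetaNormSq_lt_of_memLp hθ' hθ hq₀ hq₁ hprod
  · obtain ⟨h, hh⟩ := exists_mul_sqrt_thetaNormSq_lt_of_memLp hθ' hθ hq₁ hq₀ (by rwa [mul_comm])
    refine ⟨h.swap, ?_⟩
    show _ * √(thetaNormSq θ h.swap) < √(thetaNormSq θ (T h.swap))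
    rwa [thetaNormSq_swap, ← thetaNormSq_swap θ (T h.swap)]
end

section
/- Let G be a group, H a subgroup, and π a representation of G on a Hilbert space H_π which is uniformly bounded with constant C ≥ 1, i.e., C^{−1}‖ξ‖ ≤ ‖π(x)ξ‖ ≤ C‖ξ‖ for all x ∈ G and ξ ∈ H_π. Suppose m is a right-invariant mean on the bounded functions on H (i.e., H is amenable). Then ⟨ξ,η⟩_H := m(h ↦ ⟨π(h)ξ, π(h)η⟩) defines an inner product on H_π whose induced norm ‖·‖_H satisfies C^{−1}‖ξ‖ ≤ ‖ξ‖_H ≤ C‖ξ‖, π(h) is an isometry for ‖·‖_H for every h ∈ H, and ‖π(x)ξ‖_H ≤ C‖ξ‖_H for all x ∈ G. -/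
/-!
Averaging the pulled-back inner products `⟪π h ξ, π h η⟫` over `H` with the mean `m` gives a
Hermitian form because `m` is linear, positive and commutes with complex conjugation. Since `m` is
monotone on real functions and normalized, the pointwise bounds `C⁻¹‖ξ‖ ≤ ‖π h ξ‖ ≤ C‖ξ‖` pass to the
averaged norm. Right invariance of `m` makes each `π h` an isometry, and the identity
`π h (π x ξ) = π (h x h⁻¹) (π h ξ)` bounds `π x` by `C` for the new norm.
-/

def BoundedFn {H : Type*} (f : H → ℂ) : Prop := ∃ B : ℝ, ∀ h, ‖f h‖ ≤ B

namespace BoundedFn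

variable {ι : Type*}

theorem const (c : ℂ) : BoundedFn fun _ : ι => c := ⟨‖c‖, fun _ => le_rfl⟩

theorem of_norm_le {f g : ι → ℂ} (hf : BoundedFn f) (hgf : ∀ i, ‖g i‖ ≤ ‖f i‖) :
    BoundedFn g :=
  let ⟨B, hB⟩ := hf
  ⟨B, fun i => (hgf i).trans (hB i)⟩

theorem add {f g : ι → ℂ} (hf : BoundedFn f) (hg : BoundedFn g) : BoundedFn (f + g) :=
  let ⟨B, hB⟩ := hf
  let ⟨B', hB'⟩ := hg
  ⟨B + B', fun i => (norm_add_le _ _).trans (add_le_add (hB i) (hB' i))⟩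

theorem smul (c : ℂ) {f : ι → ℂ} (hf : BoundedFn f) : BoundedFn (c • f) :=
  let ⟨B, hB⟩ := hf
  ⟨‖c‖ * B, fun i => by
    simpa only [Pi.smul_apply, smul_eq_mul, norm_mul] using
      mul_le_mul_of_nonneg_left (hB i) (norm_nonneg c)⟩

theorem sub {f g : ι → ℂ} (hf : BoundedFn f) (hg : BoundedFn g) : BoundedFn (f - g) := by
  rw [sub_eq_add_neg]
  exact hf.add (hg.of_norm_le fun i => by simp)

end BoundedFn

/-- The axioms only constrain `m` on bounded functions. -/
structure IsMean {ι : Type*} (m : (ι → ℂ) → ℂ) : Prop where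
  map_add : ∀ f g : ι → ℂ, BoundedFn f → BoundedFn g → m (f + g) = m f + m g
  map_smul : ∀ (c : ℂ) (f : ι → ℂ), BoundedFn f → m (c • f) = c * m f
  nonneg : ∀ f : ι → ℂ, BoundedFn f → (∀ i, 0 ≤ (f i).re ∧ (f i).im = 0) →
    0 ≤ (m f).re ∧ (m f).im = 0
  map_one : m (fun _ => 1) = 1

namespace IsMean

open ComplexConjugate ComplexOrder

variable {ι : Type*} {m : (ι → ℂ) → ℂ} (hm : IsMean m)
include hm

theorem map_const (c : ℂ) : m (fun _ => c) = c := by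
  have hc : (fun _ : ι => c) = c • fun _ => (1 : ℂ) := by ext; simp
  rw [hc, hm.map_smul c _ (BoundedFn.const 1), hm.map_one, mul_one]

theorem map_sub {f g : ι → ℂ} (hf : BoundedFn f) (hg : BoundedFn g) :
    m (f - g) = m f - m g := by
  have := hm.map_add (f - g) g (hf.sub hg) hg
  rw [sub_add_cancel] at this
  rw [this, add_sub_cancel_right]

theorem mono {f g : ι → ℂ} (hf : BoundedFn f) (hg : BoundedFn g) (hfg : f ≤ g) :
    m f ≤ m g := by
  have hpos := hm.nonneg (g - f) (hg.sub hf) fun i => by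
    obtain ⟨hre, him⟩ := Complex.le_def.1 (hfg i)
    simp [hre, him]
  rw [hm.map_sub hg hf] at hpos
  exact sub_nonneg.1 (Complex.nonneg_iff.2 ⟨hpos.1, hpos.2.symm⟩)

theorem re_le_re {f g : ι → ℝ} (hf : BoundedFn fun i => (f i : ℂ))
    (hg : BoundedFn fun i => (g i : ℂ)) (hfg : ∀ i, f i ≤ g i) :
    (m fun i => (f i : ℂ)).re ≤ (m fun i => (g i : ℂ)).re :=
  (Complex.le_def.1 <| hm.mono hf hg fun i => Complex.real_le_real.2 (hfg i)).1

theorem im_eq_zero {f : ι → ℝ} (hf : BoundedFn fun i => (f i : ℂ)) :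
    (m fun i => (f i : ℂ)).im = 0 := by
  obtain ⟨B, hB⟩ := hf
  have hle := hm.mono (BoundedFn.const ((-B : ℝ) : ℂ)) ⟨B, hB⟩ fun i =>
    Complex.real_le_real.2 (neg_le_of_abs_le (by simpa using hB i))
  rw [hm.map_const] at hle
  simpa using (Complex.le_def.1 hle).2.symm

theorem map_conj {f : ι → ℂ} (hf : BoundedFn f) : m (fun i => conj (f i)) = conj (m f) := by
  have hre : BoundedFn fun i => ((f i).re : ℂ) :=
    hf.of_norm_le fun i => by simpa using Complex.abs_re_le_norm (f i)
  have him : BoundedFn fun i => ((f i).im : ℂ) :=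
    hf.of_norm_le fun i => by simpa using Complex.abs_im_le_norm (f i)
  have split : ∀ c : ℂ, m ((fun i => ((f i).re : ℂ)) + c • fun i => ((f i).im : ℂ)) =
      m (fun i => ((f i).re : ℂ)) + c * m (fun i => ((f i).im : ℂ)) := fun c => by
    rw [hm.map_add _ _ hre (him.smul c), hm.map_smul _ _ him]
  have hf_eq : f = (fun i => ((f i).re : ℂ)) + Complex.I • fun i => ((f i).im : ℂ) := by
    funext i; apply Complex.ext <;> simp
  have hconj_eq : (fun i => conj (f i)) =
      (fun i => ((f i).re : ℂ)) + (-Complex.I) • fun i => ((f i).im : ℂ) := by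
    funext i; apply Complex.ext <;> simp
  rw [hconj_eq, split, hf_eq, split]
  apply Complex.ext <;> simp [hm.im_eq_zero hre, hm.im_eq_zero him]

end IsMean

section MeanInner

open ComplexConjugate

variable {ι E : Type*} [NormedAddCommGroup E] [InnerProductSpace ℂ E]

noncomputable def meanInner (m : (ι → ℂ) → ℂ) (ρ : ι → E →L[ℂ] E) (ξ η : E) : ℂ :=
  m fun i => inner ℂ (ρ i ξ) (ρ i η)

noncomputable def meanNorm (m : (ι → ℂ) → ℂ) (ρ : ι → E →L[ℂ] E) (ξ : E) : ℝ :=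
  √(meanInner m ρ ξ ξ).re

variable {m : (ι → ℂ) → ℂ} {ρ : ι → E →L[ℂ] E} {C : ℝ}

theorem boundedFn_inner (hρ : ∀ i ξ, ‖ρ i ξ‖ ≤ C * ‖ξ‖) (ξ η : E) :
    BoundedFn fun i => inner ℂ (ρ i ξ) (ρ i η) :=
  ⟨C * ‖ξ‖ * (C * ‖η‖), fun i => (norm_inner_le_norm _ _).trans <|
    mul_le_mul (hρ i ξ) (hρ i η) (norm_nonneg _) ((norm_nonneg _).trans (hρ i ξ))⟩

theorem inner_self_eq_ofReal_norm_sq (x : E) : inner ℂ x x = ((‖x‖ ^ 2 : ℝ) : ℂ) := by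
  exact_mod_cast inner_self_eq_norm_sq_to_K (𝕜 := ℂ) x

theorem meanInner_self (ξ : E) :
    meanInner m ρ ξ ξ = m fun i => ((‖ρ i ξ‖ ^ 2 : ℝ) : ℂ) := by
  simp only [meanInner, inner_self_eq_ofReal_norm_sq]

theorem boundedFn_norm_sq (hρ : ∀ i ξ, ‖ρ i ξ‖ ≤ C * ‖ξ‖) (ξ : E) :
    BoundedFn fun i => ((‖ρ i ξ‖ ^ 2 : ℝ) : ℂ) := by
  simpa only [inner_self_eq_ofReal_norm_sq] using boundedFn_inner hρ ξ ξ

variable (hm : IsMean m) (hρ : ∀ i ξ, ‖ρ i ξ‖ ≤ C * ‖ξ‖)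
include hm hρ

theorem meanInner_conj_symm (ξ η : E) : meanInner m ρ η ξ = conj (meanInner m ρ ξ η) := by
  simp only [meanInner, ← hm.map_conj (boundedFn_inner hρ ξ η), inner_conj_symm]

theorem meanInner_add_right (ξ η ζ : E) :
    meanInner m ρ ξ (η + ζ) = meanInner m ρ ξ η + meanInner m ρ ξ ζ := by
  simp only [meanInner, map_add, inner_add_right]
  exact hm.map_add _ _ (boundedFn_inner hρ ξ η) (boundedFn_inner hρ ξ ζ)

theorem meanInner_smul_right (c : ℂ) (ξ η : E) :
    meanInner m ρ ξ (c • η) = c * meanInner m ρ ξ η := by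
  simp only [meanInner, map_smul, inner_smul_right]
  exact hm.map_smul _ _ (boundedFn_inner hρ ξ η)

theorem meanInner_self_nonneg (ξ : E) :
    0 ≤ (meanInner m ρ ξ ξ).re ∧ (meanInner m ρ ξ ξ).im = 0 := by
  rw [meanInner_self]
  exact ⟨by simpa [hm.map_const] using
      hm.re_le_re (BoundedFn.const 0) (boundedFn_norm_sq hρ ξ) fun i => sq_nonneg ‖ρ i ξ‖,
    hm.im_eq_zero (boundedFn_norm_sq hρ ξ)⟩

theorem le_meanNorm {ξ : E} {a : ℝ} (ha : 0 ≤ a) (h : ∀ i, a ≤ ‖ρ i ξ‖) :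
    a ≤ meanNorm m ρ ξ := by
  refine Real.le_sqrt_of_sq_le ?_
  have := hm.re_le_re (BoundedFn.const _) (boundedFn_norm_sq hρ ξ) fun i =>
    pow_le_pow_left₀ ha (h i) 2
  rwa [hm.map_const, Complex.ofReal_re, ← meanInner_self (m := m) (ρ := ρ) ξ] at this

theorem meanNorm_le_mul_meanNorm {ξ η : E} {K : ℝ} (hK : 0 ≤ K)
    (h : ∀ i, ‖ρ i ξ‖ ≤ K * ‖ρ i η‖) : meanNorm m ρ ξ ≤ K * meanNorm m ρ η := by
  have hscale : (fun i => ((K ^ 2 * ‖ρ i η‖ ^ 2 : ℝ) : ℂ)) =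
      ((K ^ 2 : ℝ) : ℂ) • fun i => ((‖ρ i η‖ ^ 2 : ℝ) : ℂ) := by
    funext i; simp
  have hle := hm.re_le_re (boundedFn_norm_sq hρ ξ)
    (hscale ▸ (boundedFn_norm_sq hρ η).smul ((K ^ 2 : ℝ) : ℂ)) fun i => by
      rw [← mul_pow]; exact pow_le_pow_left₀ (norm_nonneg _) (h i) 2
  rw [hscale, hm.map_smul _ _ (boundedFn_norm_sq hρ η), Complex.re_ofReal_mul,
    ← meanInner_self (m := m) (ρ := ρ) ξ, ← meanInner_self (m := m) (ρ := ρ) η] at hle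
  rw [meanNorm, meanNorm, Real.sqrt_le_left (by positivity), mul_pow,
    Real.sq_sqrt (meanInner_self_nonneg hm hρ η).1]
  exact hle

theorem meanNorm_le {ξ : E} {b : ℝ} (hb : 0 ≤ b) (h : ∀ i, ‖ρ i ξ‖ ≤ b) :
    meanNorm m ρ ξ ≤ b := by
  refine (Real.sqrt_le_left hb).2 ?_
  have := hm.re_le_re (boundedFn_norm_sq hρ ξ) (BoundedFn.const _) fun i =>
    pow_le_pow_left₀ (norm_nonneg _) (h i) 2
  rwa [hm.map_const, Complex.ofReal_re, ← meanInner_self (m := m) (ρ := ρ) ξ] at this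

theorem eq_zero_of_meanInner_self_eq_zero {c : ℝ} (hc : 0 < c)
    (hlow : ∀ i ξ, c * ‖ξ‖ ≤ ‖ρ i ξ‖) {ξ : E} (h0 : meanInner m ρ ξ ξ = 0) : ξ = 0 := by
  have hle := le_meanNorm hm hρ (by positivity) (hlow · ξ)
  rw [meanNorm, h0, Complex.zero_re, Real.sqrt_zero] at hle
  exact norm_le_zero_iff.1 (nonpos_of_mul_nonpos_right hle hc)

end MeanInner

section Invariance

variable {E : Type*} [NormedAddCommGroup E] [InnerProductSpace ℂ E] {C : ℝ}

theorem meanNorm_map_apply {H : Type*} [Group H] {m : (H → ℂ) → ℂ}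
    (hinv : ∀ f : H → ℂ, BoundedFn f → ∀ g : H, m (fun h => f (h * g)) = m f)
    {ρ : H →* (E →L[ℂ] E)} (hρ : ∀ h ξ, ‖ρ h ξ‖ ≤ C * ‖ξ‖) (g : H) (ξ : E) :
    meanNorm m ρ (ρ g ξ) = meanNorm m ρ ξ := by
  have := hinv _ (boundedFn_inner hρ ξ ξ) g
  simp only [map_mul, mul_apply_eq_comp] at this
  rw [meanNorm, meanNorm, meanInner, meanInner, this]

theorem norm_apply_apply_le {G : Type*} [Group G] {π : G →* (E →L[ℂ] E)}
    (hπ : ∀ x ξ, ‖π x ξ‖ ≤ C * ‖ξ‖) (g x : G) (ξ : E) : ‖π g (π x ξ)‖ ≤ C * ‖π g ξ‖ := by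
  have hconj : π g (π x ξ) = π (g * x * g⁻¹) (π g ξ) := by
    rw [← mul_apply_eq_comp, ← map_mul, ← mul_apply_eq_comp, ← map_mul,
      inv_mul_cancel_right]
  rw [hconj]
  exact hπ _ _

end Invariance

/-- Averaging over an amenable subgroup: the mean of the translated inner products is an
inner product whose norm is equivalent to the original one, for which H acts by isometries
and for which the representation is still bounded by the same constant. -/
theorem stmt_8 {G : Type*} [Group G] (H : Subgroup G)
    {E : Type*} [NormedAddCommGroup E] [InnerProductSpace ℂ E]
    (π : G →* (E →L[ℂ] E)) (C : ℝ) (hC : 1 ≤ C)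
    (hub : ∀ (x : G) (ξ : E), C⁻¹ * ‖ξ‖ ≤ ‖π x ξ‖ ∧ ‖π x ξ‖ ≤ C * ‖ξ‖)
    (m : (H → ℂ) → ℂ)
    (h_add : ∀ f g : H → ℂ, BoundedFn f → BoundedFn g → m (f + g) = m f + m g)
    (h_smul : ∀ (c : ℂ) (f : H → ℂ), BoundedFn f → m (c • f) = c * m f)
    (h_pos : ∀ f : H → ℂ, BoundedFn f → (∀ h, 0 ≤ (f h).re ∧ (f h).im = 0) →
      0 ≤ (m f).re ∧ (m f).im = 0)
    (h_one : m (fun _ => 1) = 1)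
    (h_inv : ∀ f : H → ℂ, BoundedFn f → ∀ g : H, m (fun h => f (h * g)) = m f) :
    let ip : E → E → ℂ := fun ξ η => m (fun h => (inner ℂ (π (h : G) ξ) (π (h : G) η) : ℂ))
    let N : E → ℝ := fun ξ => Real.sqrt (ip ξ ξ).re
    (∀ ξ η : E, ip η ξ = (starRingEnd ℂ) (ip ξ η)) ∧
    (∀ ξ : E, 0 ≤ (ip ξ ξ).re ∧ (ip ξ ξ).im = 0) ∧
    (∀ ξ η ζ : E, ip ξ (η + ζ) = ip ξ η + ip ξ ζ) ∧
    (∀ (c : ℂ) (ξ η : E), ip ξ (c • η) = c * ip ξ η) ∧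
    (∀ ξ : E, ip ξ ξ = 0 → ξ = 0) ∧
    (∀ ξ : E, C⁻¹ * ‖ξ‖ ≤ N ξ ∧ N ξ ≤ C * ‖ξ‖) ∧
    (∀ (h : H) (ξ : E), N (π (h : G) ξ) = N ξ) ∧
    (∀ (x : G) (ξ : E), N (π x ξ) ≤ C * N ξ) := by
  intro ip N
  have hm : IsMean m := ⟨h_add, h_smul, h_pos, h_one⟩
  have hC0 : 0 < C := one_pos.trans_le hC
  have hupper : ∀ (h : H) ξ, ‖π.comp H.subtype h ξ‖ ≤ C * ‖ξ‖ := fun h ξ => (hub h ξ).2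
  refine ⟨meanInner_conj_symm hm hupper, meanInner_self_nonneg hm hupper,
    meanInner_add_right hm hupper, meanInner_smul_right hm hupper,
    fun ξ => eq_zero_of_meanInner_self_eq_zero hm hupper (inv_pos.2 hC0) fun h ξ => (hub h ξ).1,
    fun ξ => ⟨le_meanNorm hm hupper (by positivity) fun h => (hub h ξ).1,
      meanNorm_le hm hupper (by positivity) fun h => (hub h ξ).2⟩,
    meanNorm_map_apply h_inv hupper,
    fun x ξ => meanNorm_le_mul_meanNorm hm hupper hC0.le fun h =>
      norm_apply_apply_le (fun x ξ => (hub x ξ).2) h x ξ⟩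
end

section
/- Let λ ∈ (−1/2, 0) and let f : ℝ² \ {0} → ℂ be continuous with f(δv) = |δ|^{2λ−1} f(v) for all δ ≠ 0 and v ≠ 0, such that the double integral on the right converges absolutely. Then ∫_ℝ∫_ℝ f(1,t) conj(f(1,u)) |t−u|^{−(1+2λ)} dt du = (1/4)∫_{−π}^{π}∫_{−π}^{π} f(cos θ, sin θ) conj(f(cos φ, sin φ)) |csc(θ−φ)|^{1+2λ} dθ dφ. -/
/-!
Substitute t = tan θ, u = tan φ with θ, φ ∈ (-π/2, π/2). The Jacobian contributes cos⁻²θ cos⁻²φ,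
homogeneity gives f(1, tan θ) = cos^{1-2λ}θ · f(cos θ, sin θ), and
tan θ - tan φ = sin(θ - φ) / (cos θ cos φ) turns the kernel into |csc(θ - φ)|^{1+2λ} times
cos^{1+2λ}θ cos^{1+2λ}φ; all powers of cos θ and cos φ cancel. Since f is even, the resulting
integrand on the circle is π-periodic in each variable, so its integral over (-π, π]² is four times
its integral over (-π/2, π/2]².
-/

open Real MeasureTheory Set

section VectorValued

variable {E : Type*} [NormedAddCommGroup E] [NormedSpace ℝ E]

theorem Function.Periodic.setIntegral_Ioc_eq_two_smul {g : ℝ → E} {T : ℝ}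
    (hg : Function.Periodic g T) (hT : 0 < T) {t : ℝ} (s : ℝ)
    (hi : IntegrableOn g (Ioc t (t + 2 * T))) :
    ∫ x in Ioc t (t + 2 * T), g x = (2 : ℝ) • ∫ x in Ioc s (s + T), g x := by
  have hint := hg.intervalIntegrable hT.ne' (t := t)
    ((intervalIntegrable_iff_integrableOn_Ioc_of_le (by linarith)).2
      (hi.mono_set (Ioc_subset_Ioc_right (by linarith))))
  rw [← intervalIntegral.integral_of_le (by linarith), ← intervalIntegral.integral_of_le
    (by linarith), ← hg.intervalIntegral_add_eq t s]
  simpa [two_smul, two_mul] using hg.intervalIntegral_add_zsmul_eq 2 t hint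

theorem setIntegral_Ioc_prod_Ioc_eq_four_smul {F : ℝ × ℝ → E} {T : ℝ} (hT : 0 < T)
    (h₁ : ∀ x y, F (x + T, y) = F (x, y)) (h₂ : ∀ x y, F (x, y + T) = F (x, y)) {t : ℝ} (s : ℝ)
    (hF : Integrable F
      ((volume.restrict (Ioc t (t + 2 * T))).prod (volume.restrict (Ioc t (t + 2 * T))))) :
    ∫ x in Ioc t (t + 2 * T), ∫ y in Ioc t (t + 2 * T), F (x, y) =
      (4 : ℝ) • ∫ x in Ioc s (s + T), ∫ y in Ioc s (s + T), F (x, y) := by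
  have inner : ∀ᵐ x ∂(volume.restrict (Ioc t (t + 2 * T))),
      ∫ y in Ioc t (t + 2 * T), F (x, y) = (2 : ℝ) • ∫ y in Ioc s (s + T), F (x, y) :=
    hF.prod_right_ae.mono fun x hx =>
      Function.Periodic.setIntegral_Ioc_eq_two_smul (g := fun y => F (x, y)) (h₂ x) hT s hx
  have outer_int : IntegrableOn (fun x => ∫ y in Ioc s (s + T), F (x, y)) (Ioc t (t + 2 * T)) := by
    refine (hF.integral_prod_left.smul (1 / 2 : ℝ)).congr ?_
    filter_upwards [inner] with x hx
    simp [hx, smul_smul]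
  rw [integral_congr_ae inner, integral_smul,
    Function.Periodic.setIntegral_Ioc_eq_two_smul (fun x => by simp only [h₁]) hT s outer_int,
    smul_smul]
  norm_num

theorem integral_eq_integral_Ioo_tan (g : ℝ → E) :
    ∫ t, g t = ∫ θ in Ioo (-(π / 2)) (π / 2), (cos θ ^ 2)⁻¹ • g (tan θ) := by
  rw [← setIntegral_univ, ← image_tan_Ioo,
    integral_image_eq_integral_abs_deriv_smul measurableSet_Ioo
      (fun x hx => (hasDerivAt_tan (cos_pos_of_mem_Ioo hx).ne').hasDerivWithinAt) injOn_tan g]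
  refine setIntegral_congr_fun measurableSet_Ioo fun x hx => ?_
  rw [abs_of_nonneg (by positivity), one_div]

theorem integral_integral_eq_integral_Ioo_tan (G : ℝ → ℝ → E) :
    ∫ t, ∫ u, G t u = ∫ θ in Ioo (-(π / 2)) (π / 2), ∫ φ in Ioo (-(π / 2)) (π / 2),
      (cos θ ^ 2)⁻¹ • (cos φ ^ 2)⁻¹ • G (tan θ) (tan φ) := by
  rw [integral_eq_integral_Ioo_tan]
  refine setIntegral_congr_fun measurableSet_Ioo fun θ _ => ?_
  rw [integral_eq_integral_Ioo_tan, integral_smul]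

theorem tan_sub_tan {θ φ : ℝ} (hθ : cos θ ≠ 0) (hφ : cos φ ≠ 0) :
    tan θ - tan φ = sin (θ - φ) / (cos θ * cos φ) := by
  rw [tan_eq_sin_div_cos, tan_eq_sin_div_cos, sin_sub]
  field_simp

theorem abs_tan_sub_tan_rpow_neg {θ φ : ℝ} (hθ : 0 < cos θ) (hφ : 0 < cos φ) (a : ℝ) :
    |tan θ - tan φ| ^ (-a) = |(sin (θ - φ))⁻¹| ^ a * (cos θ ^ a * cos φ ^ a) := by
  have hc := mul_pos hθ hφ
  rw [tan_sub_tan hθ.ne' hφ.ne', abs_div, abs_of_pos hc,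
    rpow_neg (div_nonneg (abs_nonneg _) hc.le), div_rpow (abs_nonneg _) hc.le,
    mul_rpow hθ.le hφ.le, abs_inv, inv_rpow (abs_nonneg _), inv_div, div_eq_mul_inv, mul_comm]

end VectorValued

section Homogeneous

def IsHomogeneous (lam : ℝ) (f : ℝ × ℝ → ℂ) : Prop :=
  ∀ δ : ℝ, δ ≠ 0 → ∀ v : ℝ × ℝ, v ≠ 0 → f (δ • v) = ((|δ| : ℝ) : ℂ) ^ (2 * (lam : ℂ) - 1) * f v

noncomputable def circleIntegrand (f : ℝ × ℝ → ℂ) (a : ℝ) (z : ℝ × ℝ) : ℂ :=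
  f (cos z.1, sin z.1) * (starRingEnd ℂ) (f (cos z.2, sin z.2)) *
    ((|(sin (z.1 - z.2))⁻¹| ^ a : ℝ) : ℂ)

variable {lam : ℝ} {f : ℝ × ℝ → ℂ}

theorem cos_sin_ne_zero (θ : ℝ) : ((cos θ, sin θ) : ℝ × ℝ) ≠ 0 := fun h => by
  simpa [show cos θ = 0 from congrArg Prod.fst h, show sin θ = 0 from congrArg Prod.snd h]
    using sin_sq_add_cos_sq θ

theorem IsHomogeneous.apply_neg (hf : IsHomogeneous lam f) {v : ℝ × ℝ} (hv : v ≠ 0) :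
    f (-v) = f v := by
  simpa using hf (-1) (by norm_num) v hv

theorem IsHomogeneous.apply_one_tan (hf : IsHomogeneous lam f) {θ : ℝ} (hθ : 0 < cos θ) :
    f (1, tan θ) = ((cos θ ^ (1 - 2 * lam) : ℝ) : ℂ) * f (cos θ, sin θ) := by
  have hsmul : (cos θ)⁻¹ • ((cos θ, sin θ) : ℝ × ℝ) = (1, tan θ) := by
    rw [Prod.smul_mk, smul_eq_mul, smul_eq_mul, inv_mul_cancel₀ hθ.ne', tan_eq_sin_div_cos,
      inv_mul_eq_div]
  rw [← hsmul, hf _ (inv_ne_zero hθ.ne') _ (cos_sin_ne_zero θ), abs_of_pos (inv_pos.2 hθ),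
    show 2 * (lam : ℂ) - 1 = ((2 * lam - 1 : ℝ) : ℂ) by push_cast; ring,
    ← Complex.ofReal_cpow (inv_nonneg.2 hθ.le), inv_rpow hθ.le, ← rpow_neg hθ.le, neg_sub]

theorem IsHomogeneous.circleIntegrand_add_pi_fst (hf : IsHomogeneous lam f) (a θ φ : ℝ) :
    circleIntegrand f a (θ + π, φ) = circleIntegrand f a (θ, φ) := by
  rw [circleIntegrand, circleIntegrand, show θ + π - φ = θ - φ + π by ring, sin_add_pi,
    cos_add_pi, sin_add_pi, ← Prod.neg_mk, hf.apply_neg (cos_sin_ne_zero θ), inv_neg, abs_neg]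

theorem IsHomogeneous.circleIntegrand_add_pi_snd (hf : IsHomogeneous lam f) (a θ φ : ℝ) :
    circleIntegrand f a (θ, φ + π) = circleIntegrand f a (θ, φ) := by
  rw [circleIntegrand, circleIntegrand, show θ - (φ + π) = θ - φ - π by ring, sin_sub_pi,
    cos_add_pi, sin_add_pi, ← Prod.neg_mk, hf.apply_neg (cos_sin_ne_zero φ), inv_neg, abs_neg]

theorem IsHomogeneous.inv_cos_sq_smul_tan_eq_circleIntegrand (hf : IsHomogeneous lam f)
    {θ φ : ℝ} (hθ : 0 < cos θ) (hφ : 0 < cos φ) :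
    (cos θ ^ 2)⁻¹ • (cos φ ^ 2)⁻¹ • (f (1, tan θ) * (starRingEnd ℂ) (f (1, tan φ)) *
      ((|tan θ - tan φ| ^ (-(1 + 2 * lam)) : ℝ) : ℂ)) =
      circleIntegrand f (1 + 2 * lam) (θ, φ) := by
  have cancel : ∀ {c : ℝ}, 0 < c → (c ^ 2)⁻¹ * (c ^ (1 - 2 * lam) * c ^ (1 + 2 * lam)) = 1 :=
    fun hc => by
      rw [← rpow_add hc, show 1 - 2 * lam + (1 + 2 * lam) = (2 : ℝ) by ring, rpow_two,
        inv_mul_cancel₀ (pow_ne_zero 2 hc.ne')]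
  have cancel₂ := congrArg ((↑) : ℝ → ℂ) (congrArg₂ (· * ·) (cancel hθ) (cancel hφ))
  push_cast at cancel₂
  rw [hf.apply_one_tan hθ, hf.apply_one_tan hφ, abs_tan_sub_tan_rpow_neg hθ hφ, circleIntegrand,
    Complex.real_smul, Complex.real_smul, map_mul, Complex.conj_ofReal]
  push_cast
  linear_combination (f (cos θ, sin θ) * (starRingEnd ℂ) (f (cos φ, sin φ)) *
      ((|(sin (θ - φ))⁻¹| ^ (1 + 2 * lam) : ℝ) : ℂ)) * cancel₂

theorem norm_circleIntegrand (a : ℝ) (z : ℝ × ℝ) :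
    ‖circleIntegrand f a z‖ =
      ‖f (cos z.1, sin z.1)‖ * ‖f (cos z.2, sin z.2)‖ * |(sin (z.1 - z.2))⁻¹| ^ a := by
  rw [circleIntegrand, norm_mul, norm_mul, Complex.norm_conj, Complex.norm_real, norm_eq_abs,
    abs_of_nonneg (rpow_nonneg (abs_nonneg _) _)]

theorem measurable_circleIntegrand (hf : ContinuousOn f {v | v ≠ 0}) (a : ℝ) :
    Measurable (circleIntegrand f a) := by
  have hcirc : Continuous fun θ => f (cos θ, sin θ) :=
    hf.comp_continuous (continuous_cos.prodMk continuous_sin) cos_sin_ne_zero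
  exact ((hcirc.comp continuous_fst).measurable.mul
    (Complex.continuous_conj.comp (hcirc.comp continuous_snd)).measurable).mul
    (Complex.measurable_ofReal.comp
      ((continuous_sin.comp (continuous_fst.sub continuous_snd)).measurable.inv.abs.pow_const a))

theorem integrable_circleIntegrand (hf : ContinuousOn f {v | v ≠ 0}) {μ : Measure (ℝ × ℝ)}
    {a : ℝ} (habs : Integrable (fun z : ℝ × ℝ => ‖f (cos z.1, sin z.1)‖ *
      ‖f (cos z.2, sin z.2)‖ * |(sin (z.1 - z.2))⁻¹| ^ a) μ) :
    Integrable (circleIntegrand f a) μ :=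
  (integrable_norm_iff (measurable_circleIntegrand hf a).aestronglyMeasurable).1
    (habs.congr (ae_of_all _ fun z => (norm_circleIntegrand a z).symm))

end Homogeneous

theorem stmt_10_general (lam : ℝ)
    (f : ℝ × ℝ → ℂ) (hf : ContinuousOn f {v : ℝ × ℝ | v ≠ 0})
    (hom : ∀ δ : ℝ, δ ≠ 0 → ∀ v : ℝ × ℝ, v ≠ 0 →
      f (δ • v) = ((|δ| : ℝ) : ℂ) ^ (2 * (lam : ℂ) - 1) * f v)
    (habs : Integrable
      (fun z : ℝ × ℝ => ‖f (Real.cos z.1, Real.sin z.1)‖ *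
        ‖f (Real.cos z.2, Real.sin z.2)‖ *
        |(Real.sin (z.1 - z.2))⁻¹| ^ (1 + 2 * lam))
      ((volume.restrict (Set.Ioc (-π) π)).prod (volume.restrict (Set.Ioc (-π) π)))) :
    ∫ t : ℝ, ∫ u : ℝ, f (1, t) * (starRingEnd ℂ) (f (1, u)) *
        ((|t - u| ^ (-(1 + 2 * lam)) : ℝ) : ℂ) =
      (1/4 : ℂ) * ∫ θ in Set.Ioc (-π) π, ∫ φ in Set.Ioc (-π) π,
        f (Real.cos θ, Real.sin θ) * (starRingEnd ℂ) (f (Real.cos φ, Real.sin φ)) *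
          ((|(Real.sin (θ - φ))⁻¹| ^ (1 + 2 * lam) : ℝ) : ℂ) := by
  have hI : Ioc (-π) π = Ioc (-π) (-π + 2 * π) := by rw [show -π + 2 * π = π by ring]
  rw [hI] at habs
  have hcircle := setIntegral_Ioc_prod_Ioc_eq_four_smul pi_pos
    (IsHomogeneous.circleIntegrand_add_pi_fst hom _)
    (IsHomogeneous.circleIntegrand_add_pi_snd hom _) (-(π / 2)) (integrable_circleIntegrand hf habs)
  rw [← hI, show -(π / 2) + π = π / 2 by ring] at hcircle
  calc _ = ∫ θ in Ioo (-(π / 2)) (π / 2), ∫ φ in Ioo (-(π / 2)) (π / 2),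
          circleIntegrand f (1 + 2 * lam) (θ, φ) := by
        rw [integral_integral_eq_integral_Ioo_tan]
        refine setIntegral_congr_fun measurableSet_Ioo fun θ hθ => ?_
        exact setIntegral_congr_fun measurableSet_Ioo fun φ hφ =>
          IsHomogeneous.inv_cos_sq_smul_tan_eq_circleIntegrand hom (cos_pos_of_mem_Ioo hθ)
            (cos_pos_of_mem_Ioo hφ)
    _ = (1 / 4 : ℂ) * ∫ θ in Ioc (-π) π, ∫ φ in Ioc (-π) π,
          circleIntegrand f (1 + 2 * lam) (θ, φ) := by
        rw [hcircle, Complex.real_smul]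
        simp only [integral_Ioc_eq_integral_Ioo]
        push_cast
        ring

/-- Passing from the line picture to the circle picture for the complementary series norm:
∫∫ f(1,t) conj(f(1,u)) |t−u|^{−(1+2λ)} dt du
  = (1/4) ∫_{−π}^{π}∫_{−π}^{π} f(cos θ,sin θ) conj(f(cos φ,sin φ)) |csc(θ−φ)|^{1+2λ} dθ dφ. -/
theorem stmt_10 (lam : ℝ) (h1 : -(1/2) < lam) (h2 : lam < 0)
    (f : ℝ × ℝ → ℂ) (hf : ContinuousOn f {v : ℝ × ℝ | v ≠ 0})
    (hom : ∀ δ : ℝ, δ ≠ 0 → ∀ v : ℝ × ℝ, v ≠ 0 →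
      f (δ • v) = ((|δ| : ℝ) : ℂ) ^ (2 * (lam : ℂ) - 1) * f v)
    (habs : Integrable
      (fun z : ℝ × ℝ => ‖f (Real.cos z.1, Real.sin z.1)‖ *
        ‖f (Real.cos z.2, Real.sin z.2)‖ *
        |(Real.sin (z.1 - z.2))⁻¹| ^ (1 + 2 * lam))
      ((volume.restrict (Set.Ioc (-π) π)).prod (volume.restrict (Set.Ioc (-π) π)))) :
    ∫ t : ℝ, ∫ u : ℝ, f (1, t) * (starRingEnd ℂ) (f (1, u)) *
        ((|t - u| ^ (-(1 + 2 * lam)) : ℝ) : ℂ) =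
      (1/4 : ℂ) * ∫ θ in Set.Ioc (-π) π, ∫ φ in Set.Ioc (-π) π,
        f (Real.cos θ, Real.sin θ) * (starRingEnd ℂ) (f (Real.cos φ, Real.sin φ)) *
          ((|(Real.sin (θ - φ))⁻¹| ^ (1 + 2 * lam) : ℝ) : ℂ) :=
  stmt_10_general lam f hf hom habs
end

section
/- Let α, β ∈ ℝ with 0 < α < 1/2, and define t_α(u) = i tan(π(1/4 + (α+iu)/2)). Then for all u ∈ ℝ, |t_α(2β−u)/t_α(u)|² = (1 + 2 sinh(πβ) sinh(π(β−u))/(cosh(πu) + sin(πα))) / (1 + 2 sinh(πβ) sinh(π(β−u))/(cosh(πu) − sin(πα))). In particular, when β > 0, |t_α(2β−u)/t_α(u)| < 1 if u < β, = 1 if u = β, and > 1 if u > β. -/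
/-!
Write `t_α(u) = i tan(x + iy)` with `2x = π/2 + πα` and `2y = πu`. The classical identity
`|tan(x + iy)|² = (cosh 2y - cos 2x) / (cosh 2y + cos 2x)` gives `|t_α(u)|² = g(cosh πu)` with
`g(c) = (c + sin πα) / (c - sin πα)`. The formula then follows from
`cosh(π(2β - u)) = cosh(πu) + 2 sinh(πβ) sinh(π(β - u))`, and since `g` is strictly decreasing
on `(sin πα, ∞)`, which contains every `cosh πu`, comparing `|t_α(2β - u)|` with `|t_α(u)|`
amounts to the sign of `sinh(π(β - u))`.
-/

open Real

namespace Complex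

lemma normSq_sin_add_mul_I (x y : ℝ) :
    normSq (sin (x + y * I)) = (Real.cosh (2 * y) - Real.cos (2 * x)) / 2 := by
  rw [sin_add_mul_I, ← ofReal_sin, ← ofReal_cos, ← ofReal_sinh, ← ofReal_cosh, ← ofReal_mul,
    ← ofReal_mul, normSq_add_mul_I, Real.cosh_two_mul, Real.cos_two_mul']
  nlinarith [Real.sin_sq_add_cos_sq x, Real.cosh_sq_sub_sinh_sq y]

lemma normSq_cos_add_mul_I (x y : ℝ) :
    normSq (cos (x + y * I)) = (Real.cosh (2 * y) + Real.cos (2 * x)) / 2 := by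
  rw [cos_add_mul_I, ← ofReal_sin, ← ofReal_cos, ← ofReal_sinh, ← ofReal_cosh, ← ofReal_mul,
    ← ofReal_mul, sub_eq_add_neg, ← neg_mul, ← ofReal_neg, normSq_add_mul_I, Real.cosh_two_mul,
    Real.cos_two_mul']
  nlinarith [Real.sin_sq_add_cos_sq x, Real.cosh_sq_sub_sinh_sq y]

lemma norm_tan_add_mul_I_sq (x y : ℝ) :
    ‖tan (x + y * I)‖ ^ 2 =
      (Real.cosh (2 * y) - Real.cos (2 * x)) / (Real.cosh (2 * y) + Real.cos (2 * x)) := by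
  rw [tan_eq_sin_div_cos, norm_div, div_pow, Complex.sq_norm, Complex.sq_norm,
    normSq_sin_add_mul_I, normSq_cos_add_mul_I, div_div_div_cancel_right₀ two_ne_zero]

end Complex

namespace Real

lemma cosh_two_mul_sub (a b : ℝ) : cosh (2 * b - a) = cosh a + 2 * sinh b * sinh (b - a) := by
  rw [two_mul, add_sub_assoc, cosh_add, cosh_sub, sinh_sub]
  linear_combination cosh_sq_sub_sinh_sq b * cosh a

lemma cosh_lt_cosh_two_mul_sub_iff {a b : ℝ} (hb : 0 < b) :
    cosh a < cosh (2 * b - a) ↔ a < b := by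
  rw [cosh_two_mul_sub, lt_add_iff_pos_right, mul_pos_iff_of_pos_left (by positivity),
    sinh_pos_iff, sub_pos]

lemma cosh_two_mul_sub_lt_cosh_iff {a b : ℝ} (hb : 0 < b) :
    cosh (2 * b - a) < cosh a ↔ b < a := by
  have h := cosh_lt_cosh_two_mul_sub_iff (a := 2 * b - a) hb
  rw [sub_sub_cancel] at h
  rw [h]
  constructor <;> intro <;> linarith

end Real

lemma one_add_div_div_one_add_div {K : Type*} [Field K] {c d s : K} (hp : c + s ≠ 0)
    (hm : c - s ≠ 0) :
    (1 + d / (c + s)) / (1 + d / (c - s)) = (c + d + s) / (c + d - s) / ((c + s) / (c - s)) := by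
  rw [one_add_div hp, one_add_div hm, div_div_div_comm, add_right_comm, add_sub_right_comm]

lemma strictAntiOn_add_div_sub {s : ℝ} (hs : 0 < s) :
    StrictAntiOn (fun c : ℝ => (c + s) / (c - s)) (Set.Ioi s) := by
  intro a ha b hb hab
  rw [Set.mem_Ioi, ← sub_pos] at ha hb
  rw [div_lt_div_iff₀ hb ha]
  nlinarith

open Complex in
/-- The function `t_α` of the paper. -/
noncomputable def tanProfile (α u : ℝ) : ℂ := I * tan (π * (1 / 4 + (α + I * u) / 2))

lemma norm_tanProfile_sq (α u : ℝ) :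
    ‖tanProfile α u‖ ^ 2 = (cosh (π * u) + sin (π * α)) / (cosh (π * u) - sin (π * α)) := by
  have harg : (π : ℂ) * (1 / 4 + (α + Complex.I * u) / 2) =
      ↑(π / 4 + π * α / 2) + ↑(π * u / 2) * Complex.I := by
    push_cast; ring
  rw [tanProfile, harg, norm_mul, Complex.norm_I, one_mul, Complex.norm_tan_add_mul_I_sq,
    show 2 * (π / 4 + π * α / 2) = π * α + π / 2 by ring, cos_add_pi_div_two,
    show 2 * (π * u / 2) = π * u by ring, sub_neg_eq_add, ← sub_eq_add_neg]

lemma sin_pi_mul_mem_Ioo {α : ℝ} (hα₀ : 0 < α) (hα₁ : α < 1 / 2) :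
    sin (π * α) ∈ Set.Ioo 0 1 := by
  constructor
  · exact sin_pos_of_pos_of_lt_pi (by positivity) (by nlinarith [pi_pos])
  · rw [← sin_pi_div_two]
    exact sin_lt_sin_of_lt_of_le_pi_div_two (by nlinarith [pi_pos]) le_rfl (by nlinarith [pi_pos])

lemma norm_tanProfile_pos {α : ℝ} (hα₀ : 0 < α) (hα₁ : α < 1 / 2) (u : ℝ) :
    0 < ‖tanProfile α u‖ := by
  obtain ⟨hs₀, hs₁⟩ := sin_pi_mul_mem_Ioo hα₀ hα₁
  have hcosh := one_le_cosh (π * u)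
  refine lt_of_pow_lt_pow_left₀ 2 (norm_nonneg _) ?_
  rw [zero_pow two_ne_zero, norm_tanProfile_sq]
  exact div_pos (by linarith) (by linarith)

lemma norm_tanProfile_lt_iff {α : ℝ} (hα₀ : 0 < α) (hα₁ : α < 1 / 2) (a b : ℝ) :
    ‖tanProfile α a‖ < ‖tanProfile α b‖ ↔ cosh (π * b) < cosh (π * a) := by
  obtain ⟨hs₀, hs₁⟩ := sin_pi_mul_mem_Ioo hα₀ hα₁
  have hmem (u : ℝ) : cosh (π * u) ∈ Set.Ioi (sin (π * α)) :=
    hs₁.trans_le (one_le_cosh _)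
  rw [← sq_lt_sq₀ (norm_nonneg _) (norm_nonneg _), norm_tanProfile_sq, norm_tanProfile_sq]
  exact (strictAntiOn_add_div_sub hs₀).lt_iff_gt (hmem a) (hmem b)

/-- For 0 < α < 1/2 and t_α(u) = i·tan(π(1/4+(α+iu)/2)):
|t_α(2β−u)/t_α(u)|² = (1 + 2sinh(πβ)sinh(π(β−u))/(cosh(πu)+sin(πα)))
                    / (1 + 2sinh(πβ)sinh(π(β−u))/(cosh(πu)−sin(πα))),
and for β > 0 the quotient is < 1, = 1, > 1 according as u < β, u = β, u > β. -/
theorem stmt_18 (α β : ℝ) (h1 : 0 < α) (h2 : α < 1/2) :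
    let t : ℝ → ℂ := fun u =>
      Complex.I * Complex.tan ((Real.pi : ℂ) * (1/4 + ((α : ℂ) + Complex.I * u) / 2))
    (∀ u : ℝ, ‖t (2 * β - u) / t u‖ ^ 2 =
        (1 + 2 * Real.sinh (π * β) * Real.sinh (π * (β - u)) /
            (Real.cosh (π * u) + Real.sin (π * α))) /
        (1 + 2 * Real.sinh (π * β) * Real.sinh (π * (β - u)) /
            (Real.cosh (π * u) - Real.sin (π * α)))) ∧
    (0 < β → ∀ u : ℝ,
      (u < β → ‖t (2 * β - u) / t u‖ < 1) ∧
      (u = β → ‖t (2 * β - u) / t u‖ = 1) ∧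
      (β < u → 1 < ‖t (2 * β - u) / t u‖)) := by
  intro t
  rw [show t = tanProfile α from rfl]
  have hreflect (u : ℝ) : π * (2 * β - u) = 2 * (π * β) - π * u := by ring
  obtain ⟨hs₀, hs₁⟩ := sin_pi_mul_mem_Ioo h1 h2
  refine ⟨fun u => ?_, fun hβ u => ⟨fun hu => ?_, fun hu => ?_, fun hu => ?_⟩⟩
  · have hcosh := one_le_cosh (π * u)
    rw [norm_div, div_pow, norm_tanProfile_sq, norm_tanProfile_sq, hreflect, cosh_two_mul_sub,
      ← mul_sub, one_add_div_div_one_add_div (by linarith) (by linarith)]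
  · rw [norm_div, div_lt_one (norm_tanProfile_pos h1 h2 u), norm_tanProfile_lt_iff h1 h2,
      hreflect, cosh_lt_cosh_two_mul_sub_iff (by positivity)]
    exact mul_lt_mul_of_pos_left hu pi_pos
  · rw [hu, two_mul, add_sub_cancel_right,
      div_self (norm_pos_iff.1 (norm_tanProfile_pos h1 h2 β)), norm_one]
  · rw [norm_div, one_lt_div (norm_tanProfile_pos h1 h2 u), norm_tanProfile_lt_iff h1 h2,
      hreflect, cosh_two_mul_sub_lt_cosh_iff (by positivity)]
    exact mul_lt_mul_of_pos_left hu pi_pos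
end
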